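/- In the heterogeneous setup, the matrix Q − P + D_blk is symmetric, and for every Y = (Y_s)_{s∈S} one has vec(Y)ᵀ (Q − P + D_blk) vec(Y) = Σ_{s∈S} Σ_{s'∈S} Σ_{t∈T_{ss'}} Σ_{(i,j):(A_t)_{ij}=1} ‖(Y_s)_{i,:} H_t − (Y_{s'})_{j,:}‖². In particular, Q − P + D_blk is positive semidefinite. -/

import Mathlib

open Matrix Kronecker BigOperators

/-- **Heterogeneous setup.**  `S` is a finite set of node types; each `s : S` has `n s`
nodes and feature dimension `d s ≥ 1`.  For each ordered pair of node types `(s, s')`,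
`T s s'` is the (finite) set of edge types connecting them; each `t : T s s'` carries a
0/1 adjacency matrix `A t ∈ ℝ^{n s × n s'}` and a compatibility matrix
`H t ∈ ℝ^{d s × d s'}`.  The edge types are closed under inversion: `einv t : T s' s`
satisfies `einv (einv t) = t` and `A (einv t) = (A t)ᵀ`. -/
structure HeteroSetup where
  S : Type
  [fintypeS : Fintype S]
  [decEqS : DecidableEq S]
  n : S → ℕ
  d : S → ℕ
  d_pos : ∀ s, 1 ≤ d s
  T : S → S → Type
  [fintypeT : ∀ s s', Fintype (T s s')]
  A : ∀ {s s' : S}, T s s' → Matrix (Fin (n s)) (Fin (n s')) ℝ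
  H : ∀ {s s' : S}, T s s' → Matrix (Fin (d s)) (Fin (d s')) ℝ
  einv : ∀ {s s' : S}, T s s' → T s' s
  einv_einv : ∀ {s s' : S} (t : T s s'), einv (einv t) = t
  A_einv : ∀ {s s' : S} (t : T s s'), A (einv t) = (A t)ᵀ
  A_zero_one : ∀ {s s' : S} (t : T s s') (i : Fin (n s)) (j : Fin (n s')),
    A t i j = 0 ∨ A t i j = 1

attribute [instance] HeteroSetup.fintypeS HeteroSetup.decEqS HeteroSetup.fintypeT

namespace HeteroSetup

variable (hg : HeteroSetup)

/-- The space of node embeddings `Y = (Y_s)_{s ∈ S}`, `Y_s ∈ ℝ^{n_s × d_s}`. -/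
abbrev Emb := ∀ s : hg.S, Matrix (Fin (hg.n s)) (Fin (hg.d s)) ℝ

/-- The type-`t` degree matrix `D_{st}` of type-`s` nodes: the diagonal matrix of the
row sums of `A t` for `t ∈ T_{ss'}`. -/
noncomputable def Dst {s s' : hg.S} (t : hg.T s s') : Matrix (Fin (hg.n s)) (Fin (hg.n s)) ℝ :=
  Matrix.diagonal fun i => ∑ j, hg.A t i j

/-- `D_s = Σ_{s'∈S} Σ_{t∈T_{ss'}} D_{st}`. -/
noncomputable def Dtot (s : hg.S) : Matrix (Fin (hg.n s)) (Fin (hg.n s)) ℝ :=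
  ∑ s' : hg.S, ∑ t : hg.T s s', hg.Dst t

/-- The heterogeneous energy
`ℓ(Y) = Σ_s [ (1/2)‖Y_s − B_s‖_F² + (λ/2) Σ_{s'} Σ_{t ∈ T_{ss'}} Σ_{(i,j) : (A_t)_{ij} = 1}
‖(Y_s)_{i,:} H_t − (Y_{s'})_{j,:}‖² ]`.  Since the entries of `A t` are 0 or 1, the sum
over the edges `(i,j)` with `(A_t)_{ij} = 1` is written with the weight `A t i j`. -/
noncomputable def energy (lam : ℝ) (B : hg.Emb) (Y : hg.Emb) : ℝ :=
  ∑ s : hg.S,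
    ((1 / 2 : ℝ) * ∑ i, ∑ k, (Y s i k - B s i k) ^ 2 +
      lam / 2 * ∑ s' : hg.S, ∑ t : hg.T s s', ∑ i, ∑ j,
        hg.A t i j * ∑ k', ((Y s i ᵥ* hg.H t) k' - Y s' j k') ^ 2)

/-- The global index set for the stacked column-vectorization `vec(Y)`: node type `s`,
column (feature) index `k : Fin (d s)`, row (node) index `i : Fin (n s)`. -/
abbrev Idx := Σ s : hg.S, Fin (hg.d s) × Fin (hg.n s)

/-- The stacked column-vectorization `vec(Y)`, concatenating `vec(Y_s)` over `s ∈ S`: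
`vec(Y)⟨s, (k, i)⟩ = (Y_s)_{ik}`. -/
noncomputable def vecOf (Y : hg.Emb) : hg.Idx → ℝ := fun x => Y x.1 x.2.2 x.2.1

/-- The block matrix `P` with blocks `P_{ss'} = Σ_{t∈T_{ss'}} (H_t + H_{t_inv}ᵀ) ⊗ A_t`
(entrywise: the `((k,i),(k',j))` entry of the `(s,s')` block is
`(H_t + H_{t_inv}ᵀ)_{k k'} (A_t)_{i j}`). -/
noncomputable def Pmat : Matrix hg.Idx hg.Idx ℝ := fun x y =>
  ∑ t : hg.T x.1 y.1, (hg.H t + (hg.H (hg.einv t))ᵀ) x.2.1 y.2.1 * hg.A t x.2.2 y.2.2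

/-- The block-diagonal matrix `Q` with diagonal blocks
`Q_s = Σ_{s'∈S} Σ_{t∈T_{ss'}} (H_t H_tᵀ ⊗ D_{st})`. -/
noncomputable def Qmat : Matrix hg.Idx hg.Idx ℝ :=
  Matrix.blockDiagonal' fun s => ∑ s' : hg.S, ∑ t : hg.T s s',
    (hg.H t * (hg.H t)ᵀ) ⊗ₖ hg.Dst t

/-- The block-diagonal matrix `D_blk` with diagonal blocks `I_{d_s} ⊗ D_s`. -/
noncomputable def Dblk : Matrix hg.Idx hg.Idx ℝ :=
  Matrix.blockDiagonal' fun s => (1 : Matrix (Fin (hg.d s)) (Fin (hg.d s)) ℝ) ⊗ₖ hg.Dtot s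

end HeteroSetup

open Matrix HeteroSetup

/-!
Expanding `‖(Y_s)_{i,:} H_t − (Y_{s'})_{j,:}‖²` along each edge gives three edge sums, and these
are exactly the quadratic forms of `Q`, `P` and `D_blk`: the block `H_t Hₜᵀ ⊗ D_{st}` of `Q` counts
`‖(Y_s)_{i,:} H_t‖²` once per edge leaving `i`. The other two need the edge inversion
`(s, s', t, i, j) ↦ (s', s, t_inv, j, i)`, a bijection of the edge set because `A_{t_inv} = A_tᵀ`:
it turns the degree term of `D_blk` into `Σ ‖(Y_{s'})_{j,:}‖²` over edges, and the `H_{t_inv}ᵀ`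
half of `P` into a second copy of the `H_t` half, which produces the cross term
`2 ⟨(Y_s)_{i,:} H_t, (Y_{s'})_{j,:}⟩`. Since the weights `A_t` are `0` or `1`, the form is
nonnegative, and the same inversion makes `P` symmetric.
-/

namespace Matrix

section Blocks

variable {R : Type*} [NonUnitalNonAssocSemiring R] {ι : Type*} [Fintype ι]
  {κ : ι → Type*} [∀ i, Fintype (κ i)]

theorem dotProduct_mulVec_sigma (M : Matrix (Σ i, κ i) (Σ i, κ i) R) (v w : (Σ i, κ i) → R) :
    v ⬝ᵥ (M *ᵥ w) = ∑ i, ∑ j,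
      (fun a => v ⟨i, a⟩) ⬝ᵥ (M.submatrix (Sigma.mk i) (Sigma.mk j) *ᵥ fun b => w ⟨j, b⟩) := by
  simp only [dotProduct, mulVec, Fintype.sum_sigma, submatrix_apply, Finset.mul_sum]
  exact Finset.sum_congr rfl fun i _ => Finset.sum_comm

theorem dotProduct_blockDiagonal'_mulVec [DecidableEq ι] (M : ∀ i, Matrix (κ i) (κ i) R)
    (v w : (Σ i, κ i) → R) :
    v ⬝ᵥ (blockDiagonal' M *ᵥ w) =
      ∑ i, (fun a => v ⟨i, a⟩) ⬝ᵥ (M i *ᵥ fun b => w ⟨i, b⟩) := by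
  rw [dotProduct_mulVec_sigma]
  refine Finset.sum_congr rfl fun i _ => ?_
  rw [Finset.sum_eq_single_of_mem i (Finset.mem_univ i)]
  · congr 2
    ext a b
    exact blockDiagonal'_apply_eq M i a b
  · intro j _ hji
    have : (blockDiagonal' M).submatrix (Sigma.mk i) (Sigma.mk j) = 0 := by
      ext a b
      exact blockDiagonal'_apply_ne M a b hji.symm
    rw [this, zero_mulVec, dotProduct_zero]

end Blocks

theorem IsSymm.blockDiagonal' {α ι : Type*} [Zero α] [DecidableEq ι] {κ : ι → Type*}
    {M : ∀ i, Matrix (κ i) (κ i) α} (hM : ∀ i, (M i).IsSymm) :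
    (Matrix.blockDiagonal' M).IsSymm := by
  rw [IsSymm, blockDiagonal'_transpose]
  exact congrArg _ (funext fun i => (hM i).eq)

theorem IsSymm.kronecker {α m n : Type*} [Mul α] {A : Matrix m m α} {B : Matrix n n α}
    (hA : A.IsSymm) (hB : B.IsSymm) : (A ⊗ₖ B).IsSymm :=
  IsSymm.ext fun _ _ => by rw [kroneckerMap_apply, kroneckerMap_apply, hA.apply, hB.apply]

theorem isSymm_sum {α ι n : Type*} [AddCommMonoid α] (s : Finset ι) {M : ι → Matrix n n α}
    (hM : ∀ i ∈ s, (M i).IsSymm) : (∑ i ∈ s, M i).IsSymm := by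
  rw [IsSymm, transpose_sum]
  exact Finset.sum_congr rfl fun i hi => (hM i hi).eq

section Vec

variable {R : Type*} [CommSemiring R] {m m' n n' : Type*}
  [Fintype m] [Fintype m'] [Fintype n] [Fintype n']

theorem vec_dotProduct_kronecker_mulVec_vec (X : Matrix m n R) (G : Matrix n n' R)
    (B : Matrix m m' R) (Z : Matrix m' n' R) :
    vec X ⬝ᵥ ((G ⊗ₖ B) *ᵥ vec Z) = ∑ i, ∑ j, B i j * (X i ⬝ᵥ (G *ᵥ Z j)) := by
  simp only [dotProduct, mulVec, vec, kroneckerMap_apply, Fintype.sum_prod_type,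
    Finset.mul_sum]
  rw [Finset.sum_comm]
  refine Finset.sum_congr rfl fun i _ => ?_
  rw [Finset.sum_comm_cycle]
  exact Finset.sum_congr rfl fun j _ => Finset.sum_congr rfl fun k _ =>
    Finset.sum_congr rfl fun k' _ => by ring

theorem vec_dotProduct_kronecker_diagonal_mulVec_vec [DecidableEq m] (X : Matrix m n R)
    (G : Matrix n n' R) (w : m → R) (Z : Matrix m n' R) :
    vec X ⬝ᵥ ((G ⊗ₖ diagonal w) *ᵥ vec Z) = ∑ i, w i * (X i ⬝ᵥ (G *ᵥ Z i)) := by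
  simp [vec_dotProduct_kronecker_mulVec_vec, diagonal_apply, ite_mul]

theorem dotProduct_mul_transpose_mulVec (x : m → R) (H : Matrix m n R) :
    x ⬝ᵥ ((H * Hᵀ) *ᵥ x) = (x ᵥ* H) ⬝ᵥ (x ᵥ* H) := by
  rw [← mulVec_mulVec, dotProduct_mulVec, mulVec_transpose]

end Vec

theorem sum_sub_sq_eq_dotProduct {R n : Type*} [CommRing R] [Fintype n] (u v : n → R) :
    ∑ k, (u k - v k) ^ 2 = u ⬝ᵥ u - 2 * (u ⬝ᵥ v) + v ⬝ᵥ v := by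
  simp only [dotProduct, Finset.mul_sum, ← Finset.sum_sub_distrib, ← Finset.sum_add_distrib]
  exact Finset.sum_congr rfl fun k _ => by ring

end Matrix

namespace HeteroSetup

variable (hg : HeteroSetup)

abbrev EdgeFn : Type := ∀ s s' : hg.S, hg.T s s' → Fin (hg.n s) → Fin (hg.n s') → ℝ

def einvEquiv (s s' : hg.S) : hg.T s s' ≃ hg.T s' s :=
  ⟨hg.einv, hg.einv, hg.einv_einv, hg.einv_einv⟩

theorem sum_sum_sum_einv (F : ∀ s s' : hg.S, hg.T s s' → ℝ) :
    ∑ s, ∑ s', ∑ t : hg.T s s', F s s' t = ∑ s, ∑ s', ∑ t : hg.T s s', F s' s (hg.einv t) := by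
  rw [Finset.sum_comm]
  exact Finset.sum_congr rfl fun s _ => Finset.sum_congr rfl fun s' _ =>
    (Fintype.sum_equiv (hg.einvEquiv s s') _ _ fun _ => rfl).symm

theorem isSymm_Dst {s s' : hg.S} (t : hg.T s s') : (hg.Dst t).IsSymm :=
  isSymm_diagonal _

theorem isSymm_Qmat : hg.Qmat.IsSymm :=
  IsSymm.blockDiagonal' fun _ => isSymm_sum _ fun _ _ => isSymm_sum _ fun t _ =>
    IsSymm.kronecker (transpose_mul _ _) (hg.isSymm_Dst t)

theorem isSymm_Dblk : hg.Dblk.IsSymm :=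
  IsSymm.blockDiagonal' fun _ => isSymm_one.kronecker <|
    isSymm_sum _ fun _ _ => isSymm_sum _ fun t _ => hg.isSymm_Dst t

theorem isSymm_Pmat : hg.Pmat.IsSymm := by
  refine IsSymm.ext fun x y => Fintype.sum_equiv (hg.einvEquiv _ _) _ _ fun t => ?_
  simp only [einvEquiv, Equiv.coe_fn_mk, einv_einv, A_einv, transpose_apply, Matrix.add_apply]
  ring

noncomputable def edgeSum (f : hg.EdgeFn) : ℝ :=
  ∑ s, ∑ s', ∑ t : hg.T s s', ∑ i, ∑ j, hg.A t i j * f s s' t i j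

theorem edgeSum_einv (f : hg.EdgeFn) :
    hg.edgeSum f = hg.edgeSum fun s s' t i j => f s' s (hg.einv t) j i := by
  rw [edgeSum, sum_sum_sum_einv, edgeSum]
  refine Finset.sum_congr rfl fun s _ => Finset.sum_congr rfl fun s' _ =>
    Finset.sum_congr rfl fun t _ => ?_
  simp only [A_einv, transpose_apply]
  exact Finset.sum_comm

theorem edgeSum_add (f g : hg.EdgeFn) :
    hg.edgeSum (fun s s' t i j => f s s' t i j + g s s' t i j) = hg.edgeSum f + hg.edgeSum g := by
  simp only [edgeSum, mul_add, Finset.sum_add_distrib]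

theorem edgeSum_sub (f g : hg.EdgeFn) :
    hg.edgeSum (fun s s' t i j => f s s' t i j - g s s' t i j) = hg.edgeSum f - hg.edgeSum g := by
  simp only [edgeSum, mul_sub, Finset.sum_sub_distrib]

theorem edgeSum_nonneg {f : hg.EdgeFn}
    (hf : ∀ s s' t i j, 0 ≤ f s s' t i j) : 0 ≤ hg.edgeSum f := by
  refine Finset.sum_nonneg fun s _ => Finset.sum_nonneg fun s' _ => Finset.sum_nonneg fun t _ =>
    Finset.sum_nonneg fun i _ => Finset.sum_nonneg fun j _ => mul_nonneg ?_ (hf s s' t i j)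
  rcases hg.A_zero_one t i j with h | h <;> simp [h]

theorem vecOf_sigma_mk (Y : hg.Emb) (s : hg.S) : (fun p => hg.vecOf Y ⟨s, p⟩) = vec (Y s) := rfl

theorem vecOf_dotProduct_Qmat_mulVec (Y : hg.Emb) :
    hg.vecOf Y ⬝ᵥ (hg.Qmat *ᵥ hg.vecOf Y) =
      hg.edgeSum fun s _ t i _ => (Y s i ᵥ* hg.H t) ⬝ᵥ (Y s i ᵥ* hg.H t) := by
  rw [Qmat, dotProduct_blockDiagonal'_mulVec, edgeSum]
  refine Finset.sum_congr rfl fun s _ => ?_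
  simp only [vecOf_sigma_mk, sum_mulVec, dotProduct_sum, Dst,
    vec_dotProduct_kronecker_diagonal_mulVec_vec, dotProduct_mul_transpose_mulVec,
    Finset.sum_mul]

theorem Dtot_eq_diagonal (s : hg.S) :
    hg.Dtot s = diagonal fun i => ∑ s', ∑ t : hg.T s s', ∑ j, hg.A t i j := by
  ext i i'
  by_cases h : i = i' <;> simp [Dtot, Dst, Matrix.sum_apply, h]

theorem vecOf_dotProduct_Dblk_mulVec (Y : hg.Emb) :
    hg.vecOf Y ⬝ᵥ (hg.Dblk *ᵥ hg.vecOf Y) =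
      hg.edgeSum fun _ s' _ _ j => Y s' j ⬝ᵥ Y s' j := by
  rw [edgeSum_einv, Dblk, dotProduct_blockDiagonal'_mulVec, edgeSum]
  refine Finset.sum_congr rfl fun s _ => ?_
  simp only [vecOf_sigma_mk, Dtot_eq_diagonal, vec_dotProduct_kronecker_diagonal_mulVec_vec,
    one_mulVec, Finset.sum_mul]
  rw [Finset.sum_comm]
  exact Finset.sum_congr rfl fun s' _ => Finset.sum_comm

theorem Pmat_submatrix_sigma_mk (s s' : hg.S) :
    hg.Pmat.submatrix (Sigma.mk s) (Sigma.mk s') =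
      ∑ t : hg.T s s', (hg.H t + (hg.H (hg.einv t))ᵀ) ⊗ₖ hg.A t := by
  ext p q
  simp [Pmat, Matrix.sum_apply]

theorem vecOf_dotProduct_Pmat_mulVec (Y : hg.Emb) :
    hg.vecOf Y ⬝ᵥ (hg.Pmat *ᵥ hg.vecOf Y) =
      hg.edgeSum fun s s' t i j => 2 * ((Y s i ᵥ* hg.H t) ⬝ᵥ Y s' j) := by
  have expand : hg.vecOf Y ⬝ᵥ (hg.Pmat *ᵥ hg.vecOf Y) = hg.edgeSum fun s s' t i j =>
      Y s i ⬝ᵥ (hg.H t *ᵥ Y s' j) + Y s i ⬝ᵥ ((hg.H (hg.einv t))ᵀ *ᵥ Y s' j) := by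
    rw [dotProduct_mulVec_sigma, edgeSum]
    simp only [vecOf_sigma_mk, Pmat_submatrix_sigma_mk, sum_mulVec, dotProduct_sum,
      vec_dotProduct_kronecker_mulVec_vec, add_mulVec, dotProduct_add]
  have swap : (hg.edgeSum fun s s' t i j => Y s i ⬝ᵥ ((hg.H (hg.einv t))ᵀ *ᵥ Y s' j)) =
      hg.edgeSum fun s s' t i j => Y s i ⬝ᵥ (hg.H t *ᵥ Y s' j) := by
    rw [edgeSum_einv]
    simp only [einv_einv, dotProduct_transpose_mulVec]
  rw [expand, edgeSum_add, swap, ← two_mul]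
  simp only [edgeSum, Finset.mul_sum, dotProduct_mulVec]
  exact Finset.sum_congr rfl fun s _ => Finset.sum_congr rfl fun s' _ =>
    Finset.sum_congr rfl fun t _ => Finset.sum_congr rfl fun i _ =>
      Finset.sum_congr rfl fun j _ => by ring

theorem vecOf_dotProduct_mulVec_eq_edgeSum (Y : hg.Emb) :
    hg.vecOf Y ⬝ᵥ ((hg.Qmat - hg.Pmat + hg.Dblk) *ᵥ hg.vecOf Y) =
      hg.edgeSum fun s s' t i j => ∑ k', ((Y s i ᵥ* hg.H t) k' - Y s' j k') ^ 2 := by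
  simp only [sum_sub_sq_eq_dotProduct, edgeSum_add, edgeSum_sub, add_mulVec, sub_mulVec,
    dotProduct_add, dotProduct_sub, vecOf_dotProduct_Qmat_mulVec, vecOf_dotProduct_Pmat_mulVec,
    vecOf_dotProduct_Dblk_mulVec]

end HeteroSetup

/-- In the heterogeneous setup, `Q − P + D_blk` is symmetric, its
quadratic form satisfies, for every `Y = (Y_s)`,
`vec(Y)ᵀ (Q − P + D_blk) vec(Y)
  = Σ_{s} Σ_{s'} Σ_{t∈T_{ss'}} Σ_{(i,j):(A_t)_{ij}=1} ‖(Y_s)_{i,:} H_t − (Y_{s'})_{j,:}‖²`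
(the sum over edges is written with the 0/1 weights `A t i j`), and in particular
`Q − P + D_blk` is positive semidefinite. -/
theorem stmt3 (hg : HeteroSetup) :
    (hg.Qmat - hg.Pmat + hg.Dblk)ᵀ = hg.Qmat - hg.Pmat + hg.Dblk ∧
    (∀ Y : hg.Emb,
      hg.vecOf Y ⬝ᵥ ((hg.Qmat - hg.Pmat + hg.Dblk) *ᵥ hg.vecOf Y) =
        ∑ s : hg.S, ∑ s' : hg.S, ∑ t : hg.T s s', ∑ i, ∑ j,
          hg.A t i j * ∑ k', ((Y s i ᵥ* hg.H t) k' - Y s' j k') ^ 2) ∧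
    (hg.Qmat - hg.Pmat + hg.Dblk).PosSemidef := by
  have hsymm : (hg.Qmat - hg.Pmat + hg.Dblk).IsSymm :=
    (hg.isSymm_Qmat.sub hg.isSymm_Pmat).add hg.isSymm_Dblk
  refine ⟨hsymm, hg.vecOf_dotProduct_mulVec_eq_edgeSum,
    .of_dotProduct_mulVec_nonneg (isHermitian_iff_isSymm.2 hsymm) fun x => ?_⟩
  rw [star_trivial, ← show hg.vecOf (fun s => of fun i k => x ⟨s, (k, i)⟩) = x from rfl,
    vecOf_dotProduct_mulVec_eq_edgeSum]
  exact hg.edgeSum_nonneg fun _ _ _ _ _ => Finset.sum_nonneg fun _ _ => sq_nonneg _
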